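/- In the majorant setting, with the INL-CondG sequence assumptions (M_k s_k = −F(x_k) + r_k; ‖M_k⁻¹F'(x_k)‖ ≤ ω₁; ‖M_k⁻¹F'(x_k) − I‖ ≤ ω₂; ‖P_k r_k‖ ≤ η_k‖P_k F(x_k)‖; η_k·cond(P_k F'(x_k)) ≤ ϑ; x_{k+1} ∈ C with ‖x_{k+1} − x*‖ ≤ ‖x_k + s_k − x*‖ + √(2θ_k)‖s_k‖), {θ_k} ⊂ [0, λ²/2], and x₀ ∈ C ∩ B(x*, σ), x₀ ≠ x*, we have limsup_{k→∞} ‖x_{k+1} − x*‖/‖x_k − x*‖ ≤ ω₁[(1+ϑ)√(2θ̃) + ϑ] + ω₂, where θ̃ := limsup_{k→∞} θ_k. -/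

import Mathlib

/-!
The majorant `f` controls everything near `x*`. Banach's perturbation lemma and the majorant
condition show that `F'(x)` is invertible and that the Newton error obeys
`‖x - x* - F'(x)⁻¹ F(x)‖ ≤ f(t) / f'(t) - t = t q(t)`, where `t = ‖x - x*‖` and
`q(t) = f(t) / (t f'(t)) - 1`. Feeding this into one inexact, preconditioned Newton step followed
by the conditional-gradient correction gives
`‖x_{k+1} - x*‖ ≤ (ω₁(1+ϑ)(1+λ) q(t) + ω₁(1+ϑ)√(2θ_k) + ω₁ϑ + ω₂) t`.
Since `√(2θ_k) ≤ λ`, the factor is at most its value `Φ(t)` at `θ_k = λ²/2`, and `Φ(t) < 1` for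
`t < ρ`; so the errors decrease, and their limit is `0`: by continuity of `Φ` a positive limit `L`
would satisfy `L ≤ Φ(L) L < L`.
Finally `q(t) → 0` as `t → 0⁺`, because `f(t)/t → f'(0) = -1` and `f'(t) → -1`, and the
factor bound turns into the bound on the limsup of the ratios.
-/

open Filter Set Metric Topology
open scoped Ring

theorem Real.exists_mem_lt_of_lt_sSup {S : Set ℝ} {t : ℝ} (ht : 0 ≤ t) (h : t < sSup S) :
    ∃ s ∈ S, t < s := by
  rcases S.eq_empty_or_nonempty with rfl | hS
  · rw [Real.sSup_empty] at h; linarith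
  · exact exists_lt_of_lt_csSup hS h

theorem Metric.ball_sSup_subset {X : Type*} [PseudoMetricSpace X] (x : X) (Ω : Set X) (R : ℝ) :
    ball x (sSup {t | t ∈ Ico 0 R ∧ ball x t ⊆ Ω}) ⊆ Ω := fun y hy => by
  obtain ⟨t, ht, hyt⟩ := Real.exists_mem_lt_of_lt_sSup dist_nonneg (mem_ball.mp hy)
  exact ht.2 (mem_ball.mpr hyt)

namespace ContinuousLinearMap

variable {E : Type*} [NormedAddCommGroup E] [NormedSpace ℝ E]

theorem ring_inverse_apply_apply {T : E →L[ℝ] E} (hT : IsUnit T) (v : E) : T⁻¹ʳ (T v) = v := by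
  rw [← mul_apply_eq_comp, Ring.inverse_mul_cancel _ hT, one_apply_eq_self]

theorem apply_ring_inverse_apply {T : E →L[ℝ] E} (hT : IsUnit T) (v : E) : T (T⁻¹ʳ v) = v := by
  rw [← mul_apply_eq_comp, Ring.mul_inverse_cancel _ hT, one_apply_eq_self]

theorem isUnit_and_norm_ring_inverse_mul_le [CompleteSpace E] {A B : E →L[ℝ] E} {c : ℝ}
    (hA : IsUnit A) (hAB : ‖A⁻¹ʳ * (B - A)‖ ≤ c) (hc : c < 1) :
    IsUnit B ∧ ‖B⁻¹ʳ * A‖ ≤ (1 - c)⁻¹ := by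
  set z := -(A⁻¹ʳ * (B - A))
  have hzc : ‖z‖ ≤ c := by rw [norm_neg]; exact hAB
  have hz : ‖z‖ < 1 := hzc.trans_lt hc
  have hB : B = A * (1 - z) := by
    rw [sub_neg_eq_add, mul_add, ← mul_assoc, Ring.mul_inverse_cancel _ hA, mul_one, one_mul,
      add_sub_cancel]
  obtain ⟨u, rfl⟩ := hA
  have hBu : B = ↑(u * Units.oneSub z hz) := by rw [hB, Units.val_mul, Units.val_oneSub]
  refine ⟨hBu ▸ Units.isUnit _, ?_⟩
  rw [hBu, Ring.inverse_unit, mul_inv_rev, Units.val_mul, mul_assoc, Units.inv_mul, mul_one]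
  refine (tsum_geometric_le_of_norm_lt_one z hz).trans ?_
  have h1 : ‖(1 : E →L[ℝ] E)‖ ≤ 1 := norm_id_le
  have : (1 - ‖z‖)⁻¹ ≤ (1 - c)⁻¹ := by gcongr
  linarith

theorem norm_ring_inverse_apply_le_of_norm_apply_le {A P : E →L[ℝ] E} {r b : E} {η ϑ : ℝ}
    (hA : IsUnit A) (hP : IsUnit P) (hη : 0 ≤ η) (hres : ‖P r‖ ≤ η * ‖P b‖)
    (hcond : η * (‖(P.comp A)⁻¹ʳ‖ * ‖P.comp A‖) ≤ ϑ) :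
    ‖A⁻¹ʳ r‖ ≤ ϑ * ‖A⁻¹ʳ b‖ := by
  have hPA : IsUnit (P.comp A) := hP.mul hA
  have hPA_apply (v : E) : P.comp A (A⁻¹ʳ v) = P v := by
    rw [comp_apply, apply_ring_inverse_apply hA]
  have hr : A⁻¹ʳ r = (P.comp A)⁻¹ʳ (P r) := by rw [← hPA_apply, ring_inverse_apply_apply hPA]
  have hb : ‖P b‖ ≤ ‖P.comp A‖ * ‖A⁻¹ʳ b‖ := by rw [← hPA_apply]; exact le_opNorm _ _
  calc ‖A⁻¹ʳ r‖ ≤ ‖(P.comp A)⁻¹ʳ‖ * (η * (‖P.comp A‖ * ‖A⁻¹ʳ b‖)) := by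
        rw [hr]; exact (le_opNorm _ _).trans (by gcongr; exact hres.trans (by gcongr))
    _ = η * (‖(P.comp A)⁻¹ʳ‖ * ‖P.comp A‖) * ‖A⁻¹ʳ b‖ := by ring
    _ ≤ ϑ * ‖A⁻¹ʳ b‖ := by gcongr

theorem norm_inexact_newton_step_le {A M P : E →L[ℝ] E} {x₀ y s r b : E} {η ϑ ω₁ ω₂ e u : ℝ}
    (hA : IsUnit A) (hM : IsUnit M) (hP : IsUnit P) (hη : 0 ≤ η) (hϑ : 0 ≤ ϑ) (hu : 0 ≤ u)
    (hs : M s = -b + r) (hM₁ : ‖M⁻¹ʳ.comp A‖ ≤ ω₁) (hM₂ : ‖M⁻¹ʳ.comp A - 1‖ ≤ ω₂)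
    (hres : ‖P r‖ ≤ η * ‖P b‖) (hcond : η * (‖(P.comp A)⁻¹ʳ‖ * ‖P.comp A‖) ≤ ϑ)
    (hN : ‖y - x₀ - A⁻¹ʳ b‖ ≤ e) :
    ‖y + s - x₀‖ + u * ‖s‖ ≤
      ω₁ * (1 + ϑ) * (1 + u) * e + (ω₁ * (1 + ϑ) * u + ω₁ * ϑ + ω₂) * ‖y - x₀‖ := by
  set W := M⁻¹ʳ.comp A
  have hω₁ : 0 ≤ ω₁ := (norm_nonneg _).trans hM₁
  have hs' : s = W (A⁻¹ʳ r) - W (A⁻¹ʳ b) := by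
    simp only [W, comp_apply, apply_ring_inverse_apply hA, ← map_sub,
      ← hs.trans (neg_add_eq_sub b r), ring_inverse_apply_apply hM]
  have hnewton : ‖A⁻¹ʳ b‖ ≤ ‖y - x₀‖ + e := by
    calc ‖A⁻¹ʳ b‖ = ‖(y - x₀) - (y - x₀ - A⁻¹ʳ b)‖ := by rw [sub_sub_cancel]
      _ ≤ ‖y - x₀‖ + e := (norm_sub_le _ _).trans (by gcongr)
  have hresid : ‖W (A⁻¹ʳ r)‖ ≤ ω₁ * (ϑ * (‖y - x₀‖ + e)) :=
    (le_of_opNorm_le _ hM₁ _).trans <| by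
      gcongr
      exact (norm_ring_inverse_apply_le_of_norm_apply_le hA hP hη hres hcond).trans (by gcongr)
  have hdir : ‖W (A⁻¹ʳ b)‖ ≤ ω₁ * (‖y - x₀‖ + e) := (le_of_opNorm_le _ hM₁ _).trans (by gcongr)
  have hnext : ‖y + s - x₀‖ ≤ ω₁ * e + ω₂ * ‖y - x₀‖ + ω₁ * (ϑ * (‖y - x₀‖ + e)) := by
    have hsplit : y + s - x₀ = W (y - x₀ - A⁻¹ʳ b) - (W - 1) (y - x₀) + W (A⁻¹ʳ r) := by
      rw [hs']; simp only [map_sub, sub_apply, one_apply_eq_self]; abel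
    rw [hsplit]
    refine (norm_add_le _ _).trans (add_le_add ((norm_sub_le _ _).trans (add_le_add ?_ ?_)) hresid)
    · exact (le_of_opNorm_le _ hM₁ _).trans (by gcongr)
    · exact le_of_opNorm_le _ hM₂ _
  have hstep : ‖s‖ ≤ ω₁ * (1 + ϑ) * (‖y - x₀‖ + e) := by
    rw [hs']; refine (norm_sub_le _ _).trans ?_; nlinarith
  nlinarith [mul_le_mul_of_nonneg_left hstep hu]

end ContinuousLinearMap

/-- `e(t) / t` for the Newton error `e(t) = f t / f' t - t` of the majorant; this is the expression
in the definition of `ρ`. -/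
noncomputable def majorantRatio (f f' : ℝ → ℝ) (t : ℝ) : ℝ := f t / (t * f' t) - 1

section Majorant

variable {f f' : ℝ → ℝ} {R : ℝ}

theorem mul_majorantRatio (hf0 : f 0 = 0) (t : ℝ) : t * majorantRatio f f' t = f t / f' t - t := by
  rcases eq_or_ne t 0 with rfl | ht
  · simp [hf0]
  · rw [majorantRatio, mul_sub, mul_one, ← mul_div_assoc, mul_div_mul_left _ _ ht]

theorem lt_and_deriv_neg_of_lt_sSup (hmono : MonotoneOn f' (Ico 0 R)) {t : ℝ} (ht : 0 ≤ t)
    (htν : t < sSup {t | t ∈ Ico 0 R ∧ f' t < 0}) : t < R ∧ f' t < 0 := by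
  obtain ⟨s, ⟨hsR, hs⟩, hts⟩ := Real.exists_mem_lt_of_lt_sSup ht htν
  exact ⟨hts.trans hsR.2, (hmono ⟨ht, hts.trans hsR.2⟩ hsR hts.le).trans_lt hs⟩

theorem le_div_deriv_of_monotoneOn
    (hderiv : ∀ t ∈ Ico 0 R, HasDerivWithinAt f (f' t) (Ico 0 R) t) (hf0 : f 0 = 0)
    (hmono : MonotoneOn f' (Ico 0 R)) {t : ℝ} (ht : t ∈ Ico 0 R) (hneg : f' t < 0) :
    t ≤ f t / f' t := by
  rw [le_div_iff_of_neg hneg]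
  rcases ht.1.eq_or_lt with rfl | hpos
  · simp [hf0]
  obtain ⟨c, hc, hslope⟩ := exists_hasDerivAt_eq_slope f f' hpos
    (fun s hs => (hderiv s ⟨hs.1, hs.2.trans_lt ht.2⟩).continuousWithinAt.mono
      fun u hu => ⟨hu.1, hu.2.trans_lt ht.2⟩)
    (fun s hs => (hderiv s ⟨hs.1.le, hs.2.trans ht.2⟩).hasDerivAt
      (Ico_mem_nhds hs.1 (hs.2.trans ht.2)))
  rw [hf0, sub_zero, sub_zero, eq_div_iff hpos.ne'] at hslope
  rw [← hslope, mul_comm]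
  exact mul_le_mul_of_nonneg_left (hmono ⟨hc.1.le, hc.2.trans ht.2⟩ ht hc.2.le) hpos.le

theorem tendsto_majorantRatio (hR : 0 < R)
    (hderiv : HasDerivWithinAt f (f' 0) (Ico 0 R) 0) (hcont : ContinuousWithinAt f' (Ico 0 R) 0)
    (hf0 : f 0 = 0) (hf'0 : f' 0 = -1) :
    Tendsto (majorantRatio f f') (𝓝[>] 0) (𝓝 0) := by
  have hle : 𝓝[>] (0 : ℝ) ≤ 𝓝[Ico 0 R \ {0}] 0 := by
    rw [← nhdsWithin_Ioo_eq_nhdsGT hR]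
    exact nhdsWithin_mono _ fun t ht => ⟨Ioo_subset_Ico_self ht, ht.1.ne'⟩
  have hslope := (hasDerivWithinAt_iff_tendsto_slope.mp hderiv).mono_left hle
  have hderiv' := hcont.tendsto.mono_left (hle.trans (nhdsWithin_mono _ sdiff_subset))
  rw [hf'0] at hslope hderiv'
  have := (hslope.div hderiv' (by norm_num)).sub_const 1
  norm_num at this
  refine this.congr fun t => ?_
  simp [majorantRatio, slope_def_field, hf0, div_div]

theorem continuousAt_majorantRatio
    (hderiv : ∀ t ∈ Ico 0 R, HasDerivWithinAt f (f' t) (Ico 0 R) t)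
    (hcont : ContinuousOn f' (Ico 0 R)) {t : ℝ} (ht : t ∈ Ioo 0 R) (hne : f' t ≠ 0) :
    ContinuousAt (majorantRatio f f') t := by
  have hnhds : Ico 0 R ∈ 𝓝 t := Ico_mem_nhds ht.1 ht.2
  have hf := (hderiv t (Ioo_subset_Ico_self ht)).hasDerivAt hnhds
  have hf' := (hcont t (Ioo_subset_Ico_self ht)).continuousAt hnhds
  exact (hf.continuousAt.div (continuousAt_id.mul hf') (mul_ne_zero ht.1.ne' hne)).sub
    continuousAt_const

end Majorant

section NewtonError

open ContinuousLinearMap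

variable {E : Type*} [NormedAddCommGroup E] [NormedSpace ℝ E] {F : E → E}
  {F' : E → E →L[ℝ] E} {x₀ y : E} {f f' : ℝ → ℝ}

theorem norm_linearization_error_le {A : E →L[ℝ] E}
    (hF : ∀ τ ∈ Icc (0 : ℝ) 1, HasFDerivAt F (F' (x₀ + τ • (y - x₀))) (x₀ + τ • (y - x₀)))
    (hf : ∀ t ∈ Icc 0 ‖y - x₀‖, HasDerivWithinAt f (f' t) (Icc 0 ‖y - x₀‖) t) (hf0 : f 0 = 0)
    (hmaj : ∀ τ ∈ Icc (0 : ℝ) 1,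
      ‖A.comp (F' y - F' (x₀ + τ • (y - x₀)))‖ ≤ f' ‖y - x₀‖ - f' (τ * ‖y - x₀‖)) :
    ‖A (F' y (y - x₀) - (F y - F x₀))‖ ≤ ‖y - x₀‖ * f' ‖y - x₀‖ - f ‖y - x₀‖ := by
  set t := ‖y - x₀‖
  -- the linearization error along the segment is fenced in by its scalar counterpart `B`
  set g : ℝ → E := fun τ => A (τ • F' y (y - x₀) - (F (x₀ + τ • (y - x₀)) - F x₀))
  set B : ℝ → ℝ := fun τ => τ * t * f' t - f (τ * t)
  have hg (τ : ℝ) (hτ : τ ∈ Icc (0 : ℝ) 1) :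
      HasDerivAt g (A ((F' y - F' (x₀ + τ • (y - x₀))) (y - x₀))) τ := by
    have hseg : HasDerivAt (fun τ : ℝ => x₀ + τ • (y - x₀)) (y - x₀) τ := by
      simpa using ((hasDerivAt_id τ).smul_const (y - x₀)).const_add x₀
    have := ((hasDerivAt_id τ).smul_const (F' y (y - x₀))).sub
      (((hF τ hτ).comp_hasDerivAt τ hseg).sub_const (F x₀))
    exact (A.hasFDerivAt.comp_hasDerivAt τ this).congr_deriv (by simp)
  have hB (τ : ℝ) (hτ : τ ∈ Icc (0 : ℝ) 1) :
      HasDerivWithinAt B ((f' t - f' (τ * t)) * t) (Icc 0 1) τ := by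
    have hmaps : MapsTo (fun τ : ℝ => τ * t) (Icc 0 1) (Icc 0 t) := fun σ hσ =>
      ⟨mul_nonneg hσ.1 (norm_nonneg _), mul_le_of_le_one_left (norm_nonneg _) hσ.2⟩
    have hcomp := (hf _ (hmaps hτ)).comp τ (hasDerivAt_mul_const t).hasDerivWithinAt hmaps
    exact (((hasDerivAt_mul_const t).mul_const (f' t)).hasDerivWithinAt.sub hcomp).congr_deriv
      (by ring)
  have hfence := image_norm_le_of_norm_deriv_right_le_deriv_boundary' (a := 0) (b := 1) (f := g)
    (fun τ hτ => (hg τ hτ).continuousAt.continuousWithinAt)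
    (fun τ hτ => (hg τ (Ico_subset_Icc_self hτ)).hasDerivWithinAt)
    (B := B) (by simp [g, B, hf0]) (fun τ hτ => (hB τ hτ).continuousWithinAt)
    (fun τ hτ => (hB τ (Ico_subset_Icc_self hτ)).mono_of_mem_nhdsWithin
      (Icc_mem_nhdsGE_of_mem hτ))
    (fun τ hτ => le_of_opNorm_le _ (hmaj τ (Ico_subset_Icc_self hτ)) _)
    ⟨zero_le_one, le_rfl⟩
  simpa [g, B] using hfence

theorem isUnit_and_norm_newton_error_le [CompleteSpace E] (hx₀ : F x₀ = 0)
    (hinv : IsUnit (F' x₀))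
    (hF : ∀ τ ∈ Icc (0 : ℝ) 1, HasFDerivAt F (F' (x₀ + τ • (y - x₀))) (x₀ + τ • (y - x₀)))
    (hf : ∀ t ∈ Icc 0 ‖y - x₀‖, HasDerivWithinAt f (f' t) (Icc 0 ‖y - x₀‖) t) (hf0 : f 0 = 0)
    (hf'0 : f' 0 = -1) (hneg : f' ‖y - x₀‖ < 0)
    (hmaj : ∀ τ ∈ Icc (0 : ℝ) 1,
      ‖(F' x₀)⁻¹ʳ.comp (F' y - F' (x₀ + τ • (y - x₀)))‖ ≤ f' ‖y - x₀‖ - f' (τ * ‖y - x₀‖)) :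
    IsUnit (F' y) ∧ ‖y - x₀ - (F' y)⁻¹ʳ (F y)‖ ≤ f ‖y - x₀‖ / f' ‖y - x₀‖ - ‖y - x₀‖ := by
  set t := ‖y - x₀‖
  have hpert : ‖(F' x₀)⁻¹ʳ * (F' y - F' x₀)‖ ≤ f' t + 1 := by
    have h0 := hmaj 0 ⟨le_rfl, zero_le_one⟩
    simp only [zero_smul, add_zero, zero_mul, hf'0, sub_neg_eq_add] at h0
    exact h0
  obtain ⟨hunit, hbanach⟩ := isUnit_and_norm_ring_inverse_mul_le hinv hpert (by linarith)
  refine ⟨hunit, ?_⟩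
  have hlin := norm_linearization_error_le hF hf hf0 hmaj
  rw [hx₀, sub_zero] at hlin
  have hsplit : y - x₀ - (F' y)⁻¹ʳ (F y) =
      ((F' y)⁻¹ʳ * F' x₀) ((F' x₀)⁻¹ʳ (F' y (y - x₀) - F y)) := by
    rw [mul_apply_eq_comp, apply_ring_inverse_apply hinv, map_sub, ring_inverse_apply_apply hunit]
  calc ‖y - x₀ - (F' y)⁻¹ʳ (F y)‖ ≤ (1 - (f' t + 1))⁻¹ * (t * f' t - f t) := by
        rw [hsplit]
        refine (le_opNorm _ _).trans (mul_le_mul hbanach hlin (norm_nonneg _) ?_)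
        exact inv_nonneg.mpr (by linarith)
    _ = f t / f' t - t := by field_simp [hneg.ne]; ring

theorem norm_inexact_newton_step_le_majorantRatio_mul [CompleteSpace E] {Ω : Set E}
    {κ R η ϑ ω₁ ω₂ lam u : ℝ} {M P : E →L[ℝ] E} {s r y' : E}
    (hFderiv : ∀ x ∈ Ω, HasFDerivAt F (F' x) x) (hΩ : ball x₀ κ ⊆ Ω) (hx₀ : F x₀ = 0)
    (hinv : IsUnit (F' x₀)) (hderiv : ∀ t ∈ Ico 0 R, HasDerivWithinAt f (f' t) (Ico 0 R) t)
    (hmono : MonotoneOn f' (Ico 0 R)) (hf0 : f 0 = 0) (hf'0 : f' 0 = -1)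
    (hmaj : ∀ τ ∈ Icc (0 : ℝ) 1, ∀ x ∈ ball x₀ κ,
      ‖(F' x₀)⁻¹ʳ.comp (F' x - F' (x₀ + τ • (x - x₀)))‖ ≤ f' ‖x - x₀‖ - f' (τ * ‖x - x₀‖))
    (hyκ : ‖y - x₀‖ < κ) (hyR : ‖y - x₀‖ < R) (hneg : f' ‖y - x₀‖ < 0)
    (hM : IsUnit M) (hP : IsUnit P) (hη : 0 ≤ η) (hϑ : 0 ≤ ϑ) (hs : M s = -F y + r)
    (hM₁ : ‖M⁻¹ʳ.comp (F' y)‖ ≤ ω₁) (hM₂ : ‖M⁻¹ʳ.comp (F' y) - 1‖ ≤ ω₂)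
    (hres : ‖P r‖ ≤ η * ‖P (F y)‖) (hcond : η * (‖(P.comp (F' y))⁻¹ʳ‖ * ‖P.comp (F' y)‖) ≤ ϑ)
    (hu : 0 ≤ u) (hulam : u ≤ lam) (hy' : ‖y' - x₀‖ ≤ ‖y + s - x₀‖ + u * ‖s‖) :
    ‖y' - x₀‖ ≤ (ω₁ * (1 + ϑ) * (1 + lam) * majorantRatio f f' ‖y - x₀‖ + ω₁ * (1 + ϑ) * u
      + (ω₁ * ϑ + ω₂)) * ‖y - x₀‖ := by
  have hseg (τ : ℝ) (hτ : τ ∈ Icc (0 : ℝ) 1) : x₀ + τ • (y - x₀) ∈ ball x₀ κ := by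
    rw [mem_ball_iff_norm, add_sub_cancel_left, norm_smul, Real.norm_of_nonneg hτ.1]
    exact (mul_le_of_le_one_left (norm_nonneg _) hτ.2).trans_lt hyκ
  have hIcc : Icc 0 ‖y - x₀‖ ⊆ Ico 0 R := Icc_subset_Ico_right hyR
  obtain ⟨hunit, hnewton⟩ := isUnit_and_norm_newton_error_le hx₀ hinv
    (fun τ hτ => hFderiv _ (hΩ (hseg τ hτ))) (fun t ht => (hderiv t (hIcc ht)).mono hIcc) hf0
    hf'0 hneg (fun τ hτ => hmaj τ hτ y (mem_ball_iff_norm.mpr hyκ))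
  have hstep := norm_inexact_newton_step_le hunit hM hP hη hϑ hu hs hM₁ hM₂ hres hcond hnewton
  have he : 0 ≤ ‖y - x₀‖ * majorantRatio f f' ‖y - x₀‖ := by
    rw [mul_majorantRatio hf0]
    linarith [le_div_deriv_of_monotoneOn hderiv hf0 hmono ⟨norm_nonneg _, hyR⟩ hneg]
  rw [← mul_majorantRatio hf0] at hstep
  have hω₁ϑ : 0 ≤ ω₁ * (1 + ϑ) := mul_nonneg ((norm_nonneg _).trans hM₁) (by linarith)
  nlinarith [mul_nonneg (mul_nonneg hω₁ϑ (sub_nonneg.2 hulam)) he]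

end NewtonError

theorem forall_lt_and_tendsto_zero_of_le_mul {a : ℕ → ℝ} {Φ : ℝ → ℝ} {σ : ℝ}
    (ha : ∀ k, 0 ≤ a k) (ha₀ : a 0 < σ) (hΦ : ∀ t ∈ Ioo 0 σ, Φ t < 1)
    (hΦc : ∀ t ∈ Ioo 0 σ, ContinuousAt Φ t)
    (hstep : ∀ k, a k < σ → a (k + 1) ≤ Φ (a k) * a k) :
    (∀ k, a k < σ) ∧ Tendsto a atTop (𝓝 0) := by
  have hdec (k : ℕ) (hk : a k < σ) : a (k + 1) ≤ a k := by
    rcases (ha k).eq_or_lt with h0 | hpos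
    · simpa [← h0] using hstep k hk
    · nlinarith [hstep k hk, hΦ _ ⟨hpos, hk⟩]
  have hlt (k : ℕ) : a k < σ := by
    induction k with
    | zero => exact ha₀
    | succ k ih => exact (hdec k ih).trans_lt ih
  refine ⟨hlt, ?_⟩
  have hbdd : BddBelow (range a) := ⟨0, by rintro _ ⟨k, rfl⟩; exact ha k⟩
  have hlim := tendsto_atTop_ciInf (antitone_nat_of_succ_le fun k => hdec k (hlt k)) hbdd
  set L := ⨅ k, a k
  suffices L = 0 by rwa [this] at hlim
  by_contra hL
  have hL₀ : 0 < L := (le_ciInf ha).lt_of_ne' hL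
  have hLσ : L < σ := (ciInf_le hbdd 0).trans_lt ha₀
  have hle : L ≤ Φ L * L := le_of_tendsto_of_tendsto' (hlim.comp (tendsto_add_atTop_nat 1))
    (((hΦc L ⟨hL₀, hLσ⟩).tendsto.comp hlim).mul hlim) fun k => hstep k (hlt k)
  nlinarith [hΦ L ⟨hL₀, hLσ⟩]

theorem limsup_succ_div_le {a θ : ℕ → ℝ} {q : ℝ → ℝ} {A B c b : ℝ} (hA : 0 ≤ A) (hB : 0 ≤ B)
    (hc : 0 ≤ c) (ha : ∀ k, 0 ≤ a k) (hlim : Tendsto a atTop (𝓝 0))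
    (hq : Tendsto q (𝓝[>] 0) (𝓝 0)) (hθ : ∀ k, θ k ∈ Icc 0 b)
    (hstep : ∀ k, a (k + 1) ≤ (A * q (a k) + B * √(2 * θ k) + c) * a k) :
    limsup (fun k => a (k + 1) / a k) atTop ≤ B * √(2 * limsup θ atTop) + c := by
  set θ' := limsup θ atTop
  have hθbdd : IsBoundedUnder (· ≤ ·) atTop θ := isBoundedUnder_of ⟨b, fun k => (hθ k).2⟩
  have hθ' : 0 ≤ θ' := le_limsup_of_frequently_le (Frequently.of_forall fun k => (hθ k).1) hθbdd
  refine le_of_forall_pos_le_add fun ε hε => limsup_le_of_le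
    (isCoboundedUnder_le_of_le atTop fun k => div_nonneg (ha _) (ha _)) ?_
  set δ := ε / (A + B + 1)
  have hδ : 0 < δ := by positivity
  have hδε : (A + B) * δ ≤ ε := by
    have : (A + B + 1) * δ = ε := mul_div_cancel₀ _ (by positivity)
    nlinarith
  have hqδ : ∀ᶠ k in atTop, 0 < a k → q (a k) < δ :=
    hlim.eventually (eventually_nhdsWithin_iff.mp (hq.eventually (gt_mem_nhds hδ)))
  have hθδ : ∀ᶠ k in atTop, θ k < θ' + δ ^ 2 / 2 :=
    eventually_lt_of_limsup_lt (by linarith [sq_pos_of_pos hδ]) hθbdd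
  filter_upwards [hqδ, hθδ] with k hqk hθk
  rcases (ha k).eq_or_lt with h0 | hpos
  · rw [← h0, div_zero]; positivity
  have hsqrt : √(2 * θ k) ≤ √(2 * θ') + δ := by
    rw [Real.sqrt_le_iff]
    refine ⟨by positivity, ?_⟩
    nlinarith [Real.sq_sqrt (by linarith : 0 ≤ 2 * θ'), Real.sqrt_nonneg (2 * θ')]
  rw [div_le_iff₀ hpos]
  calc a (k + 1) ≤ (A * q (a k) + B * √(2 * θ k) + c) * a k := hstep k
    _ ≤ (A * δ + B * (√(2 * θ') + δ) + c) * a k := by gcongr; exact (hqk hpos).le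
    _ = (B * √(2 * θ') + c + (A + B) * δ) * a k := by ring
    _ ≤ (B * √(2 * θ') + c + ε) * a k := by gcongr

theorem stmt_11_general (n : ℕ) (Ω : Set (EuclideanSpace ℝ (Fin n)))
    (C : Set (EuclideanSpace ℝ (Fin n)))
    (F : EuclideanSpace ℝ (Fin n) → EuclideanSpace ℝ (Fin n))
    (F' : EuclideanSpace ℝ (Fin n) →
      (EuclideanSpace ℝ (Fin n) →L[ℝ] EuclideanSpace ℝ (Fin n)))
    (hFderiv : ∀ x ∈ Ω, HasFDerivAt F (F' x) x)
    (xs : EuclideanSpace ℝ (Fin n)) (hFxs : F xs = 0)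
    (hinv : IsUnit (F' xs))
    (R : ℝ) (hR : 0 < R)
    (κ : ℝ) (hκ : κ = sSup {t | t ∈ Set.Ico 0 R ∧ Metric.ball xs t ⊆ Ω})
    (f f' : ℝ → ℝ)
    (hderiv : ∀ t ∈ Set.Ico 0 R, HasDerivWithinAt f (f' t) (Set.Ico 0 R) t)
    (hcont : ContinuousOn f' (Set.Ico 0 R))
    (h1a : f 0 = 0) (h1b : f' 0 = -1)
    (h2 : StrictMonoOn f' (Set.Ico 0 R))
    (hmaj : ∀ τ ∈ Set.Icc (0:ℝ) 1, ∀ x ∈ Metric.ball xs κ,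
      ‖(Ring.inverse (F' xs)).comp (F' x - F' (xs + τ • (x - xs)))‖ ≤
        f' ‖x - xs‖ - f' (τ * ‖x - xs‖))
    (ν : ℝ) (hν : ν = sSup {t | t ∈ Set.Ico 0 R ∧ f' t < 0})
    (ϑ ω₁ ω₂ lam : ℝ)
    (hϑ0 : 0 ≤ ϑ) (hω₂0 : 0 ≤ ω₂) (hω₁₂ : ω₂ < ω₁)
    (hlam0 : 0 ≤ lam)
    (ρ : ℝ)
    (hρ : ρ = sSup {δ | δ ∈ Set.Ioo 0 ν ∧ ∀ t ∈ Set.Ioo 0 δ,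
      ω₁ * (1 + ϑ) * (1 + lam) * (f t / (t * f' t) - 1)
        + ω₁ * ((1 + ϑ) * lam + ϑ) + ω₂ < 1})
    (σ : ℝ) (hσ : σ = min κ ρ)
    (x s r : ℕ → EuclideanSpace ℝ (Fin n))
    (M P : ℕ → (EuclideanSpace ℝ (Fin n) →L[ℝ] EuclideanSpace ℝ (Fin n)))
    (η θ : ℕ → ℝ)
    (hθ : ∀ k, θ k ∈ Set.Icc 0 (lam ^ 2 / 2))
    (hx0 : x 0 ∈ C ∩ Metric.ball xs σ)
    (hM : ∀ k, IsUnit (M k)) (hP : ∀ k, IsUnit (P k)) (hη : ∀ k, 0 ≤ η k)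
    (hstep : ∀ k, (M k) (s k) = -F (x k) + r k)
    (hM1 : ∀ k, ‖(Ring.inverse (M k)).comp (F' (x k))‖ ≤ ω₁)
    (hM2 : ∀ k, ‖(Ring.inverse (M k)).comp (F' (x k)) - 1‖ ≤ ω₂)
    (hres : ∀ k, ‖(P k) (r k)‖ ≤ η k * ‖(P k) (F (x k))‖)
    (hcond : ∀ k, η k * (‖Ring.inverse ((P k).comp (F' (x k)))‖
      * ‖(P k).comp (F' (x k))‖) ≤ ϑ)
    (hcondg : ∀ k, ‖x (k + 1) - xs‖ ≤
      ‖x k + s k - xs‖ + Real.sqrt (2 * θ k) * ‖s k‖) :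
    Filter.limsup (fun k => ‖x (k + 1) - xs‖ / ‖x k - xs‖) Filter.atTop ≤
      ω₁ * ((1 + ϑ) * Real.sqrt (2 * Filter.limsup θ Filter.atTop) + ϑ) + ω₂ := by
  have hω₁ϑ : 0 ≤ ω₁ * (1 + ϑ) := mul_nonneg (hω₂0.trans hω₁₂.le) (by linarith)
  set Φ : ℝ → ℝ := fun t =>
    ω₁ * (1 + ϑ) * (1 + lam) * majorantRatio f f' t + ω₁ * ((1 + ϑ) * lam + ϑ) + ω₂
  have hnear (t : ℝ) (ht : 0 ≤ t) (htσ : t < σ) :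
      t < κ ∧ t < R ∧ f' t < 0 ∧ (0 < t → Φ t < 1) := by
    obtain ⟨δ, ⟨hδν, hδ⟩, htδ⟩ := Real.exists_mem_lt_of_lt_sSup ht
      (hρ ▸ htσ.trans_le (hσ ▸ min_le_right _ _))
    obtain ⟨htR, hneg⟩ := lt_and_deriv_neg_of_lt_sSup h2.monotoneOn ht (hν ▸ htδ.trans hδν.2)
    exact ⟨htσ.trans_le (hσ ▸ min_le_left _ _), htR, hneg, fun ht₀ => hδ t ⟨ht₀, htδ⟩⟩
  have hsqrt (k : ℕ) : √(2 * θ k) ≤ lam := Real.sqrt_le_iff.mpr ⟨hlam0, by nlinarith [(hθ k).2]⟩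
  have hbound (k : ℕ) (hk : ‖x k - xs‖ < σ) : ‖x (k + 1) - xs‖ ≤
      (ω₁ * (1 + ϑ) * (1 + lam) * majorantRatio f f' ‖x k - xs‖ + ω₁ * (1 + ϑ) * √(2 * θ k)
        + (ω₁ * ϑ + ω₂)) * ‖x k - xs‖ := by
    obtain ⟨hκk, hRk, hnegk, -⟩ := hnear _ (norm_nonneg _) hk
    exact norm_inexact_newton_step_le_majorantRatio_mul hFderiv (hκ ▸ ball_sSup_subset xs Ω R)
      hFxs hinv hderiv h2.monotoneOn h1a h1b (hκ ▸ hmaj) hκk hRk hnegk (hM k) (hP k) (hη k) hϑ0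
      (hstep k) (hM1 k) (hM2 k) (hres k) (hcond k) (Real.sqrt_nonneg _) (hsqrt k) (hcondg k)
  obtain ⟨hball, hlim⟩ := forall_lt_and_tendsto_zero_of_le_mul (a := fun k => ‖x k - xs‖) (Φ := Φ)
    (fun k => norm_nonneg _) (mem_ball_iff_norm.mp hx0.2)
    (fun t ht => (hnear t ht.1.le ht.2).2.2.2 ht.1)
    (fun t ht => by
      obtain ⟨-, htR, hneg, -⟩ := hnear t ht.1.le ht.2
      have := continuousAt_majorantRatio hderiv hcont ⟨ht.1, htR⟩ hneg.ne
      fun_prop)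
    (fun k hk => (hbound k hk).trans <| by
      nlinarith [mul_nonneg (mul_nonneg hω₁ϑ (sub_nonneg.2 (hsqrt k))) (norm_nonneg (x k - xs))])
  calc limsup (fun k => ‖x (k + 1) - xs‖ / ‖x k - xs‖) atTop
      ≤ ω₁ * (1 + ϑ) * √(2 * limsup θ atTop) + (ω₁ * ϑ + ω₂) :=
        limsup_succ_div_le (a := fun k => ‖x k - xs‖) (mul_nonneg hω₁ϑ (by linarith)) hω₁ϑ
          (by nlinarith) (fun k => norm_nonneg _) hlim
          (tendsto_majorantRatio hR (hderiv 0 ⟨le_rfl, hR⟩) (hcont 0 ⟨le_rfl, hR⟩) h1a h1b) hθ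
          fun k => hbound k (hball k)
    _ = ω₁ * ((1 + ϑ) * √(2 * limsup θ atTop) + ϑ) + ω₂ := by ring

theorem stmt_11 (n : ℕ) (Ω : Set (EuclideanSpace ℝ (Fin n))) (hΩ : IsOpen Ω)
    (C : Set (EuclideanSpace ℝ (Fin n))) (hCne : C.Nonempty)
    (hCconv : Convex ℝ C) (hCcomp : IsCompact C) (hCΩ : C ⊆ Ω)
    (F : EuclideanSpace ℝ (Fin n) → EuclideanSpace ℝ (Fin n))
    (F' : EuclideanSpace ℝ (Fin n) →
      (EuclideanSpace ℝ (Fin n) →L[ℝ] EuclideanSpace ℝ (Fin n)))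
    (hFderiv : ∀ x ∈ Ω, HasFDerivAt F (F' x) x)
    (hFcont : ContinuousOn F' Ω)
    (xs : EuclideanSpace ℝ (Fin n)) (hxsC : xs ∈ C) (hFxs : F xs = 0)
    (hinv : IsUnit (F' xs))
    (R : ℝ) (hR : 0 < R)
    (κ : ℝ) (hκ : κ = sSup {t | t ∈ Set.Ico 0 R ∧ Metric.ball xs t ⊆ Ω})
    (f f' : ℝ → ℝ)
    (hderiv : ∀ t ∈ Set.Ico 0 R, HasDerivWithinAt f (f' t) (Set.Ico 0 R) t)
    (hcont : ContinuousOn f' (Set.Ico 0 R))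
    (h1a : f 0 = 0) (h1b : f' 0 = -1)
    (h2 : StrictMonoOn f' (Set.Ico 0 R))
    (hmaj : ∀ τ ∈ Set.Icc (0:ℝ) 1, ∀ x ∈ Metric.ball xs κ,
      ‖(Ring.inverse (F' xs)).comp (F' x - F' (xs + τ • (x - xs)))‖ ≤
        f' ‖x - xs‖ - f' (τ * ‖x - xs‖))
    (ν : ℝ) (hν : ν = sSup {t | t ∈ Set.Ico 0 R ∧ f' t < 0})
    (ϑ ω₁ ω₂ lam : ℝ)
    (hϑ0 : 0 ≤ ϑ) (hϑ1 : ϑ < 1) (hω₂0 : 0 ≤ ω₂) (hω₁₂ : ω₂ < ω₁)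
    (hωϑ : ω₁ * ϑ + ω₂ < 1)
    (hlam0 : 0 ≤ lam) (hlam : lam < (1 - ω₂ - ω₁ * ϑ) / (ω₁ * (1 + ϑ)))
    (ρ : ℝ)
    (hρ : ρ = sSup {δ | δ ∈ Set.Ioo 0 ν ∧ ∀ t ∈ Set.Ioo 0 δ,
      ω₁ * (1 + ϑ) * (1 + lam) * (f t / (t * f' t) - 1)
        + ω₁ * ((1 + ϑ) * lam + ϑ) + ω₂ < 1})
    (σ : ℝ) (hσ : σ = min κ ρ)
    (x s r : ℕ → EuclideanSpace ℝ (Fin n))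
    (M P : ℕ → (EuclideanSpace ℝ (Fin n) →L[ℝ] EuclideanSpace ℝ (Fin n)))
    (η θ : ℕ → ℝ)
    (hθ : ∀ k, θ k ∈ Set.Icc 0 (lam ^ 2 / 2))
    (hx0 : x 0 ∈ C ∩ Metric.ball xs σ) (hx0ne : x 0 ≠ xs)
    (hM : ∀ k, IsUnit (M k)) (hP : ∀ k, IsUnit (P k)) (hη : ∀ k, 0 ≤ η k)
    (hstep : ∀ k, (M k) (s k) = -F (x k) + r k)
    (hM1 : ∀ k, ‖(Ring.inverse (M k)).comp (F' (x k))‖ ≤ ω₁)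
    (hM2 : ∀ k, ‖(Ring.inverse (M k)).comp (F' (x k)) - 1‖ ≤ ω₂)
    (hres : ∀ k, ‖(P k) (r k)‖ ≤ η k * ‖(P k) (F (x k))‖)
    (hcond : ∀ k, η k * (‖Ring.inverse ((P k).comp (F' (x k)))‖
      * ‖(P k).comp (F' (x k))‖) ≤ ϑ)
    (hxC : ∀ k, x (k + 1) ∈ C)
    (hcondg : ∀ k, ‖x (k + 1) - xs‖ ≤
      ‖x k + s k - xs‖ + Real.sqrt (2 * θ k) * ‖s k‖) :
    Filter.limsup (fun k => ‖x (k + 1) - xs‖ / ‖x k - xs‖) Filter.atTop ≤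
      ω₁ * ((1 + ϑ) * Real.sqrt (2 * Filter.limsup θ Filter.atTop) + ϑ) + ω₂ :=
  stmt_11_general n Ω C F F' hFderiv xs hFxs hinv R hR κ hκ f f' hderiv hcont h1a h1b h2 hmaj ν hν ϑ
    ω₁ ω₂ lam hϑ0 hω₂0 hω₁₂ hlam0 ρ hρ σ hσ x s r M P η θ hθ hx0 hM hP hη hstep hM1 hM2 hres hcond
    hcondg
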